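/- Suppose either (I) 3/4 < p < 1 and ℓ_inf(α) > 1/(4p−2), or (II) p = 1, 1/(4p−2) < ℓ_inf(α) ≤ ℓ_sup(α) < 1 and 0 < ℓ_inf(β) ≤ ℓ_sup(β) < (1−ℓ_sup(α))/(1−ℓ_inf(α)). Then Σ_{n=1}^∞ 1/(s_n⁴ a_n⁴) < ∞. -/

import Mathlib

open MeasureTheory ProbabilityTheory Filter

noncomputable section

/-- The increments `X_n := S_n - S_{n-1}` of the walk. -/
def derwX {Ω : Type*} (S : ℕ → Ω → ℝ) (n : ℕ) (ω : Ω) : ℝ := S n ω - S (n - 1) ω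

/-- The natural filtration `F_n^X = σ(X_1, …, X_n)` of the increments. -/
def derwF {Ω : Type*} (S : ℕ → Ω → ℝ) (n : ℕ) : MeasurableSpace Ω :=
  ⨆ k ∈ Finset.Icc 1 n, MeasurableSpace.comap (derwX S k) Real.measurableSpace

/-- The dynamic elephant random walk (DERW) with parameters `p, q ∈ [0,1]` and
sequences `α, β` in `[0,1]` (indexed from 1). -/
structure IsDERW {Ω : Type*} [MeasurableSpace Ω] (μ : Measure Ω)
    (p q : ℝ) (α β : ℕ → ℝ) (S : ℕ → Ω → ℝ) : Prop where
  hp : p ∈ Set.Icc (0 : ℝ) 1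
  hq : q ∈ Set.Icc (0 : ℝ) 1
  hα : ∀ n, α n ∈ Set.Icc (0 : ℝ) 1
  hβ : ∀ n, β n ∈ Set.Icc (0 : ℝ) 1
  hS0 : ∀ ω, S 0 ω = 0
  hmeas : ∀ n, Measurable (derwX S n)
  hpm : ∀ n, 1 ≤ n → ∀ ω, derwX S n ω = 1 ∨ derwX S n ω = -1
  hE1 : ∫ ω, derwX S 1 ω ∂μ = α 1 * (2 * q - 1) + (1 - α 1) * (2 * β 1 - 1)
  hCE : ∀ n, 1 ≤ n → μ[derwX S (n + 1) | derwF S n]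
      =ᵐ[μ] fun ω => α (n + 1) * (2 * p - 1) / (n : ℝ) * S n ω
        + (1 - α (n + 1)) * (2 * β (n + 1) - 1)

/-- `a_n := ∏_{k=1}^{n-1} (1 + (2p-1) α_{k+1} / k)`, with `a_1 = 1`. -/
def derwa (p : ℝ) (α : ℕ → ℝ) (n : ℕ) : ℝ :=
  ∏ k ∈ Finset.Ico 1 n, (1 + (2 * p - 1) * α (k + 1) / (k : ℝ))

/-- `A_n² := ∑_{k=1}^n (1 - E[X_k]²) / a_k²`. -/
def derwAsq {Ω : Type*} [MeasurableSpace Ω] (μ : Measure Ω) (p : ℝ) (α : ℕ → ℝ)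
    (S : ℕ → Ω → ℝ) (n : ℕ) : ℝ :=
  ∑ k ∈ Finset.Icc 1 n, (1 - (∫ ω, derwX S k ω ∂μ) ^ 2) / derwa p α k ^ 2

/-- `A_∞² := ∑_{k=1}^∞ (1 - E[X_k]²) / a_k²`. -/
def derwAsqInf {Ω : Type*} [MeasurableSpace Ω] (μ : Measure Ω) (p : ℝ) (α : ℕ → ℝ)
    (S : ℕ → Ω → ℝ) : ℝ :=
  ∑' k : ℕ, (1 - (∫ ω, derwX S (k + 1) ω ∂μ) ^ 2) / derwa p α (k + 1) ^ 2

/-- The martingale `M_n := (S_n - E[S_n]) / a_n` (note `M_0 = 0` since `S_0 = 0`). -/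
def derwM {Ω : Type*} [MeasurableSpace Ω] (μ : Measure Ω) (p : ℝ) (α : ℕ → ℝ)
    (S : ℕ → Ω → ℝ) (n : ℕ) (ω : Ω) : ℝ :=
  (S n ω - ∫ ω', S n ω' ∂μ) / derwa p α n

/-- The martingale differences `Y_n := M_n - M_{n-1}`. -/
def derwY {Ω : Type*} [MeasurableSpace Ω] (μ : Measure Ω) (p : ℝ) (α : ℕ → ℝ)
    (S : ℕ → Ω → ℝ) (n : ℕ) (ω : Ω) : ℝ :=
  derwM μ p α S n ω - derwM μ p α S (n - 1) ω

/-- `s_n² := ∑_{k=n}^∞ E[Y_k²]`. -/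
def derwssq {Ω : Type*} [MeasurableSpace Ω] (μ : Measure Ω) (p : ℝ) (α : ℕ → ℝ)
    (S : ℕ → Ω → ℝ) (n : ℕ) : ℝ :=
  ∑' k : ℕ, ∫ ω, derwY μ p α S (n + k) ω ^ 2 ∂μ

/-!
The martingale increments satisfy `a_{k+1} Y_{k+1} = X_{k+1} - E[X_{k+1} | F_k^X]`,
where `|X_{k+1}| = 1` and, under either condition, `|E[X_{k+1} | F_k^X]| ≤ 1 - ε` eventually; hence
`ε / a_k ≤ |Y_k| ≤ 2 / a_k` for large `k`. Eventually `(2p - 1) α_k ≥ r` for some `r > 1/2`, so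
`a_n ≳ n^r` and `∑ E[Y_k²] < ∞`. Since `a_n / n` is non-increasing, `a_{n+k} ≤ 2 a_n` for `k ≤ n`;
summing the lower bound over `n < k ≤ 2n` gives `s_{n+1}² ≳ n ε² / a_{n+1}²`, so the terms of the
series are `O(ε⁻⁴ n⁻²)`.
-/

section Growth

variable {p : ℝ} {α : ℕ → ℝ}

lemma derwa_succ (n : ℕ) :
    derwa p α (n + 1) = derwa p α n * (1 + (2 * p - 1) * α (n + 1) / n) := by
  rcases n with _ | n
  · simp [derwa]
  · exact Finset.prod_Ico_succ_top (Nat.le_add_left 1 n) _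

lemma one_le_derwa (hc₀ : ∀ k, 0 ≤ (2 * p - 1) * α k) (n : ℕ) : 1 ≤ derwa p α n :=
  Finset.one_le_prod fun k _ => le_add_of_nonneg_right (div_nonneg (hc₀ _) k.cast_nonneg)

lemma derwa_pos (hc₀ : ∀ k, 0 ≤ (2 * p - 1) * α k) (n : ℕ) : 0 < derwa p α n :=
  one_pos.trans_le (one_le_derwa hc₀ n)

lemma antitoneOn_derwa_div (hc₀ : ∀ k, 0 ≤ (2 * p - 1) * α k)
    (hc₁ : ∀ k, (2 * p - 1) * α k ≤ 1) :
    AntitoneOn (fun n : ℕ => derwa p α n / n) (Set.Ici 1) := by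
  refine antitoneOn_nat_Ici_of_succ_le fun n hn => ?_
  have hn : (0 : ℝ) < n := by exact_mod_cast hn
  have ha := derwa_pos hc₀ n
  rw [derwa_succ, div_le_div_iff₀ (by positivity) hn]
  push_cast
  field_simp
  nlinarith [hc₁ (n + 1)]

lemma derwa_add_le_two_mul (hc₀ : ∀ k, 0 ≤ (2 * p - 1) * α k)
    (hc₁ : ∀ k, (2 * p - 1) * α k ≤ 1) {n k : ℕ} (hn : 1 ≤ n) (hk : k ≤ n) :
    derwa p α (n + k) ≤ 2 * derwa p α n := by
  have hmono := antitoneOn_derwa_div hc₀ hc₁ (Set.mem_Ici.2 hn)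
    (Set.mem_Ici.2 (hn.trans (Nat.le_add_right n k))) (Nat.le_add_right n k)
  have hn : (0 : ℝ) < n := by exact_mod_cast hn
  have hk : (k : ℝ) ≤ n := by exact_mod_cast hk
  simp only at hmono
  rw [div_le_div_iff₀ (by positivity) hn] at hmono
  push_cast at hmono
  nlinarith [derwa_pos hc₀ n]

lemma monotoneOn_derwa_div_rpow (hc₀ : ∀ k, 0 ≤ (2 * p - 1) * α k)
    (hc₁ : ∀ k, (2 * p - 1) * α k ≤ 1) {r : ℝ} (hr : 0 ≤ r) {N : ℕ} (hN : 1 ≤ N)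
    (hrate : ∀ k ≥ N, r ≤ (2 * p - 1) * α (k + 1)) :
    MonotoneOn (fun n : ℕ => derwa p α n / (n : ℝ) ^ r) (Set.Ici N) := by
  refine monotoneOn_nat_Ici_of_le_succ fun k hk => ?_
  have hk₀ : (0 : ℝ) < k := by exact_mod_cast hN.trans hk
  have hbernoulli : ((k + 1 : ℕ) : ℝ) ^ r ≤ (k : ℝ) ^ r * (1 + r / k) := by
    have h := rpow_one_add_le_one_add_mul_self (s := 1 / (k : ℝ))
      (neg_one_lt_zero.le.trans (by positivity)) hr ((hrate k hk).trans (hc₁ _))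
    calc ((k + 1 : ℕ) : ℝ) ^ r = (k : ℝ) ^ r * (1 + 1 / k) ^ r := by
          rw [← Real.mul_rpow hk₀.le (by positivity)]
          field_simp
          push_cast
          ring_nf
      _ ≤ (k : ℝ) ^ r * (1 + r / k) := by
          rw [mul_one_div] at h
          gcongr
  have hstep : ((k + 1 : ℕ) : ℝ) ^ r ≤ (1 + (2 * p - 1) * α (k + 1) / k) * (k : ℝ) ^ r := by
    rw [mul_comm]
    exact hbernoulli.trans (by gcongr; exact hrate k hk)
  rw [derwa_succ, div_le_div_iff₀ (by positivity) (by positivity), mul_assoc]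
  exact mul_le_mul_of_nonneg_left hstep (derwa_pos hc₀ k).le

lemma summable_inv_derwa_sq (hc₀ : ∀ k, 0 ≤ (2 * p - 1) * α k)
    (hc₁ : ∀ k, (2 * p - 1) * α k ≤ 1) {r : ℝ} (hr : 1 / 2 < r)
    (hrate : ∀ᶠ k in atTop, r ≤ (2 * p - 1) * α k) :
    Summable fun n : ℕ => (derwa p α n ^ 2)⁻¹ := by
  obtain ⟨N, hN⟩ := eventually_atTop.1 (hrate.and (eventually_ge_atTop 1))
  have hmono := monotoneOn_derwa_div_rpow hc₀ hc₁ (by linarith) (hN N le_rfl).2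
    fun k hk => (hN (k + 1) (hk.trans k.le_succ)).1
  have hN₀ : (0 : ℝ) < N := by exact_mod_cast (hN N le_rfl).2
  set c := derwa p α N / (N : ℝ) ^ r
  have hc : 0 < c := div_pos (derwa_pos hc₀ N) (Real.rpow_pos_of_pos hN₀ r)
  refine .of_norm_bounded_eventually_nat
    ((Real.summable_nat_rpow_inv.2 (by linarith : 1 < 2 * r)).mul_left (c ^ 2)⁻¹) ?_
  filter_upwards [eventually_ge_atTop N] with n hn
  have hn₀ : (0 : ℝ) < n := hN₀.trans_le (by exact_mod_cast hn)
  have hgrowth : c * (n : ℝ) ^ r ≤ derwa p α n :=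
    (le_div_iff₀ (Real.rpow_pos_of_pos hn₀ r)).1
      (hmono (Set.mem_Ici.2 le_rfl) (Set.mem_Ici.2 hn) hn)
  rw [Real.norm_of_nonneg (by positivity), mul_comm 2 r, Real.rpow_mul hn₀.le, Real.rpow_two,
    ← mul_inv, ← mul_pow]
  gcongr

lemma exists_gt_half_eventually_le_mul {u : ℕ → ℝ} (hu : IsBoundedUnder (· ≥ ·) atTop u)
    {c : ℝ} (hc : 0 < c) (h : 1 / 2 < c * liminf u atTop) :
    ∃ r, 1 / 2 < r ∧ ∀ᶠ k in atTop, r ≤ c * u k := by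
  refine ⟨(1 / 2 + c * liminf u atTop) / 2, by linarith, ?_⟩
  have hlt : (1 / 2 + c * liminf u atTop) / 2 / c < liminf u atTop := by
    rw [div_lt_iff₀ hc]
    linarith
  filter_upwards [eventually_lt_of_lt_liminf hlt hu] with k hk
  rw [div_lt_iff₀ hc] at hk
  linarith

end Growth

/-- The conditional mean `E[X_{k+1} | F_k^X]` prescribed by `IsDERW.hCE`. -/
def derwDrift {Ω : Type*} (p : ℝ) (α β : ℕ → ℝ) (S : ℕ → Ω → ℝ) (k : ℕ) (ω : Ω) : ℝ :=
  α (k + 1) * (2 * p - 1) / (k : ℝ) * S k ω + (1 - α (k + 1)) * (2 * β (k + 1) - 1)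

lemma abs_two_mul_sub_one_le {x : ℝ} (hx : x ∈ Set.Icc (0 : ℝ) 1) : |2 * x - 1| ≤ 1 :=
  abs_le.2 ⟨by linarith [hx.1], by linarith [hx.2]⟩

lemma derwX_succ {Ω : Type*} (S : ℕ → Ω → ℝ) (n : ℕ) (ω : Ω) :
    derwX S (n + 1) ω = S (n + 1) ω - S n ω := rfl

namespace IsDERW

variable {Ω : Type*} {m0 : MeasurableSpace Ω} {μ : Measure Ω} {p q : ℝ} {α β : ℕ → ℝ}
  {S : ℕ → Ω → ℝ}

lemma coeff_nonneg (h : IsDERW μ p q α β S) (hp : 1 / 2 ≤ p) (k : ℕ) :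
    0 ≤ (2 * p - 1) * α k :=
  mul_nonneg (by linarith) (h.hα k).1

lemma coeff_le_one (h : IsDERW μ p q α β S) (k : ℕ) : (2 * p - 1) * α k ≤ 1 := by
  nlinarith [mul_nonneg (sub_nonneg.2 h.hp.2) (h.hα k).1, (h.hα k).2]

lemma abs_derwX_le (h : IsDERW μ p q α β S) (n : ℕ) (ω : Ω) : |derwX S n ω| ≤ 1 := by
  rcases Nat.eq_zero_or_pos n with rfl | hn
  · simp [derwX]
  · rcases h.hpm n hn ω with hX | hX <;> simp [hX]

lemma abs_S_le (h : IsDERW μ p q α β S) (n : ℕ) (ω : Ω) : |S n ω| ≤ n := by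
  induction n with
  | zero => simp [h.hS0]
  | succ n ih =>
    rw [← sub_add_cancel (S (n + 1) ω) (S n ω), ← derwX_succ]
    push_cast
    linarith [abs_add_le (derwX S (n + 1) ω) (S n ω), h.abs_derwX_le (n + 1) ω]

lemma abs_S_div_le (h : IsDERW μ p q α β S) (n : ℕ) (ω : Ω) : |S n ω / n| ≤ 1 := by
  rcases Nat.eq_zero_or_pos n with rfl | hn
  · simp
  · rw [abs_div, Nat.abs_cast, div_le_one (by exact_mod_cast hn)]
    exact h.abs_S_le n ω

lemma measurable_S (h : IsDERW μ p q α β S) (n : ℕ) : Measurable (S n) := by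
  induction n with
  | zero => simp [funext h.hS0]
  | succ n ih =>
    have hS : S (n + 1) = S n + derwX S (n + 1) := funext fun ω => by simp [derwX_succ]
    exact hS ▸ ih.add (h.hmeas _)

lemma abs_derwDrift_le (h : IsDERW μ p q α β S) (k : ℕ) (ω : Ω) :
    |derwDrift p α β S k ω|
      ≤ α (k + 1) * |2 * p - 1| + (1 - α (k + 1)) * |2 * β (k + 1) - 1| := by
  have hα := h.hα (k + 1)
  have hdrift : derwDrift p α β S k ω
      = α (k + 1) * (2 * p - 1) * (S k ω / k) + (1 - α (k + 1)) * (2 * β (k + 1) - 1) := by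
    simp only [derwDrift]
    ring
  rw [hdrift]
  refine (abs_add_le _ _).trans ?_
  rw [abs_mul, abs_mul, abs_mul, abs_of_nonneg hα.1, abs_of_nonneg (sub_nonneg.2 hα.2)]
  gcongr ?_ + _
  exact mul_le_of_le_one_right (mul_nonneg hα.1 (abs_nonneg _)) (h.abs_S_div_le k ω)

lemma abs_derwDrift_le_one (h : IsDERW μ p q α β S) (k : ℕ) (ω : Ω) :
    |derwDrift p α β S k ω| ≤ 1 := by
  have hα := h.hα (k + 1)
  nlinarith [h.abs_derwDrift_le k ω, mul_le_mul_of_nonneg_left (abs_two_mul_sub_one_le h.hp) hα.1,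
    mul_le_mul_of_nonneg_left (abs_two_mul_sub_one_le (h.hβ (k + 1))) (sub_nonneg.2 hα.2)]

lemma eventually_abs_derwDrift_le (h : IsDERW μ p q α β S) (hp : 1 / 2 ≤ p)
    (hα : 1 / 2 < liminf α atTop) : ∀ᶠ k in atTop, ∀ ω, |derwDrift p α β S k ω| ≤ p := by
  have hbdd : IsBoundedUnder (· ≥ ·) atTop α := isBoundedUnder_of ⟨0, fun n => (h.hα n).1⟩
  filter_upwards [(tendsto_add_atTop_nat 1).eventually (eventually_lt_of_lt_liminf hα hbdd)]
    with k hk ω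
  have := h.abs_derwDrift_le k ω
  rw [abs_of_nonneg (by linarith : 0 ≤ 2 * p - 1)] at this
  nlinarith [mul_le_mul_of_nonneg_left (abs_two_mul_sub_one_le (h.hβ (k + 1)))
      (sub_nonneg.2 (h.hα (k + 1)).2),
    mul_le_mul_of_nonneg_right hk.le (sub_nonneg.2 h.hp.2)]

lemma exists_pos_eventually_abs_derwDrift_le (h : IsDERW μ p q α β S)
    (hα : limsup α atTop < 1) (hβ₀ : 0 < liminf β atTop) (hβ₁ : limsup β atTop < 1) :
    ∃ ε > 0, ∀ᶠ k in atTop, ∀ ω, |derwDrift p α β S k ω| ≤ 1 - ε := by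
  obtain ⟨A, hαA, hA⟩ := exists_between hα
  obtain ⟨b, hb, hbβ⟩ := exists_between hβ₀
  obtain ⟨B, hβB, hB⟩ := exists_between hβ₁
  have hαbdd : IsBoundedUnder (· ≤ ·) atTop α := isBoundedUnder_of ⟨1, fun n => (h.hα n).2⟩
  have hβbdd : IsBoundedUnder (· ≥ ·) atTop β := isBoundedUnder_of ⟨0, fun n => (h.hβ n).1⟩
  have hβbdd' : IsBoundedUnder (· ≤ ·) atTop β := isBoundedUnder_of ⟨1, fun n => (h.hβ n).2⟩
  set δ := min (2 * b) (2 * (1 - B))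
  have hδ : 0 < δ := lt_min (by linarith) (by linarith)
  refine ⟨(1 - A) * δ, mul_pos (by linarith) hδ, ?_⟩
  filter_upwards [(tendsto_add_atTop_nat 1).eventually ((eventually_lt_of_limsup_lt hαA hαbdd).and
    ((eventually_lt_of_lt_liminf hbβ hβbdd).and (eventually_lt_of_limsup_lt hβB hβbdd')))]
    with k ⟨hkA, hkb, hkB⟩ ω
  have hβ : |2 * β (k + 1) - 1| ≤ 1 - δ :=
    abs_le.2 ⟨by linarith [min_le_left (2 * b) (2 * (1 - B))],
      by linarith [min_le_right (2 * b) (2 * (1 - B))]⟩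
  have hα := h.hα (k + 1)
  nlinarith [h.abs_derwDrift_le k ω, mul_le_mul_of_nonneg_left (abs_two_mul_sub_one_le h.hp) hα.1,
    mul_le_mul_of_nonneg_left hβ (sub_nonneg.2 hα.2),
    mul_le_mul_of_nonneg_right hkA.le hδ.le]

lemma integrable_S [IsFiniteMeasure μ] (h : IsDERW μ p q α β S) (n : ℕ) :
    Integrable (S n) μ :=
  .of_bound (h.measurable_S n).aestronglyMeasurable n (ae_of_all _ (h.abs_S_le n))

lemma integrable_derwX [IsFiniteMeasure μ] (h : IsDERW μ p q α β S) (n : ℕ) :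
    Integrable (derwX S n) μ :=
  .of_bound (h.hmeas n).aestronglyMeasurable 1 (ae_of_all _ (h.abs_derwX_le n))

lemma derwF_le (h : IsDERW μ p q α β S) (n : ℕ) : derwF S n ≤ m0 :=
  iSup₂_le fun j _ => (h.hmeas j).comap_le

lemma integral_derwX_succ [IsFiniteMeasure μ] (h : IsDERW μ p q α β S) {k : ℕ} (hk : 1 ≤ k) :
    ∫ ω, derwX S (k + 1) ω ∂μ = ∫ ω, derwDrift p α β S k ω ∂μ := by
  rw [← integral_condExp (h.derwF_le k)]
  exact integral_congr_ae (h.hCE k hk)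

section Probability

variable [IsProbabilityMeasure μ]

lemma derwa_mul_derwY_succ (h : IsDERW μ p q α β S) (hp : 1 / 2 ≤ p)
    {k : ℕ} (hk : 1 ≤ k) (ω : Ω) :
    derwa p α (k + 1) * derwY μ p α S (k + 1) ω = derwX S (k + 1) ω - derwDrift p α β S k ω := by
  have hES : ∫ ω, S (k + 1) ω ∂μ = ∫ ω, S k ω ∂μ + ∫ ω, derwX S (k + 1) ω ∂μ := by
    rw [← integral_add (h.integrable_S k) (h.integrable_derwX (k + 1))]
    simp [derwX_succ]
  have hEdrift : ∫ ω, derwDrift p α β S k ω ∂μ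
      = α (k + 1) * (2 * p - 1) / k * ∫ ω, S k ω ∂μ + (1 - α (k + 1)) * (2 * β (k + 1) - 1) := by
    simp only [derwDrift]
    rw [integral_add ((h.integrable_S k).const_mul _) (integrable_const _), integral_const_mul]
    simp
  have hk₀ : (k : ℝ) ≠ 0 := by positivity
  have ha := (derwa_pos (h.coeff_nonneg hp) k).ne'
  have hF : 0 < 1 + (2 * p - 1) * α (k + 1) / k := by
    have := h.coeff_nonneg hp (k + 1)
    positivity
  have hcoef : α (k + 1) * (2 * p - 1) / k = (1 + (2 * p - 1) * α (k + 1) / k) - 1 := by ring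
  simp only [derwY, derwM, Nat.add_sub_cancel]
  rw [hES, h.integral_derwX_succ hk, hEdrift, derwa_succ, derwX_succ]
  simp only [derwDrift, hcoef]
  generalize 1 + (2 * p - 1) * α (k + 1) / k = F at hF ⊢
  field_simp
  ring

lemma abs_derwY_succ_le (h : IsDERW μ p q α β S) (hp : 1 / 2 ≤ p) {k : ℕ} (hk : 1 ≤ k)
    (ω : Ω) : |derwY μ p α S (k + 1) ω| ≤ 2 / derwa p α (k + 1) := by
  have ha := derwa_pos (h.coeff_nonneg hp) (k + 1)
  rw [le_div_iff₀ ha, mul_comm, ← abs_of_pos ha, ← abs_mul, h.derwa_mul_derwY_succ hp hk]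
  linarith [abs_sub (derwX S (k + 1) ω) (derwDrift p α β S k ω), h.abs_derwX_le (k + 1) ω,
    h.abs_derwDrift_le_one k ω]

lemma div_le_abs_derwY_succ (h : IsDERW μ p q α β S) (hp : 1 / 2 ≤ p) {k : ℕ} (hk : 1 ≤ k)
    {ε : ℝ} (hdrift : ∀ ω, |derwDrift p α β S k ω| ≤ 1 - ε) (ω : Ω) :
    ε / derwa p α (k + 1) ≤ |derwY μ p α S (k + 1) ω| := by
  have ha := derwa_pos (h.coeff_nonneg hp) (k + 1)
  have hX : |derwX S (k + 1) ω| = 1 := by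
    rcases h.hpm (k + 1) (Nat.succ_pos k) ω with hX | hX <;> simp [hX]
  rw [div_le_iff₀ ha, mul_comm, ← abs_of_pos ha, ← abs_mul, h.derwa_mul_derwY_succ hp hk]
  linarith [abs_sub_abs_le_abs_sub (derwX S (k + 1) ω) (derwDrift p α β S k ω), hdrift ω]

lemma integrable_derwY_succ_sq (h : IsDERW μ p q α β S) (hp : 1 / 2 ≤ p) {k : ℕ} (hk : 1 ≤ k) :
    Integrable (fun ω => derwY μ p α S (k + 1) ω ^ 2) μ := by
  have hmeas : Measurable (derwY μ p α S (k + 1)) := by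
    have := h.measurable_S (k + 1)
    have := h.measurable_S k
    unfold derwY derwM
    fun_prop
  refine .of_bound (hmeas.pow_const 2).aestronglyMeasurable ((2 / derwa p α (k + 1)) ^ 2)
    (ae_of_all _ fun ω => ?_)
  rw [Real.norm_eq_abs, abs_pow]
  exact pow_le_pow_left₀ (abs_nonneg _) (h.abs_derwY_succ_le hp hk ω) 2

lemma integral_derwY_succ_sq_le (h : IsDERW μ p q α β S) (hp : 1 / 2 ≤ p) {k : ℕ} (hk : 1 ≤ k) :
    ∫ ω, derwY μ p α S (k + 1) ω ^ 2 ∂μ ≤ 4 / derwa p α (k + 1) ^ 2 := by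
  calc ∫ ω, derwY μ p α S (k + 1) ω ^ 2 ∂μ ≤ ∫ _, (2 / derwa p α (k + 1)) ^ 2 ∂μ :=
        integral_mono (h.integrable_derwY_succ_sq hp hk) (integrable_const _) fun ω =>
          sq_abs (derwY μ p α S (k + 1) ω) ▸
            pow_le_pow_left₀ (abs_nonneg _) (h.abs_derwY_succ_le hp hk ω) 2
    _ = 4 / derwa p α (k + 1) ^ 2 := by simp [div_pow]; norm_num

lemma div_le_integral_derwY_succ_sq (h : IsDERW μ p q α β S) (hp : 1 / 2 ≤ p) {k : ℕ}
    (hk : 1 ≤ k) {ε : ℝ} (hε : 0 ≤ ε) (hdrift : ∀ ω, |derwDrift p α β S k ω| ≤ 1 - ε) :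
    ε ^ 2 / derwa p α (k + 1) ^ 2 ≤ ∫ ω, derwY μ p α S (k + 1) ω ^ 2 ∂μ := by
  have ha := derwa_pos (h.coeff_nonneg hp) (k + 1)
  calc ε ^ 2 / derwa p α (k + 1) ^ 2 = ∫ _, (ε / derwa p α (k + 1)) ^ 2 ∂μ := by simp [div_pow]
    _ ≤ ∫ ω, derwY μ p α S (k + 1) ω ^ 2 ∂μ :=
        integral_mono (integrable_const _) (h.integrable_derwY_succ_sq hp hk) fun ω =>
          sq_abs (derwY μ p α S (k + 1) ω) ▸
            pow_le_pow_left₀ (by positivity) (h.div_le_abs_derwY_succ hp hk hdrift ω) 2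

lemma summable_integral_derwY_sq (h : IsDERW μ p q α β S) (hp : 1 / 2 ≤ p) {r : ℝ}
    (hr : 1 / 2 < r) (hrate : ∀ᶠ k in atTop, r ≤ (2 * p - 1) * α k) :
    Summable fun j => ∫ ω, derwY μ p α S j ω ^ 2 ∂μ := by
  have hinv := (summable_nat_add_iff 1).2
    (summable_inv_derwa_sq (h.coeff_nonneg hp) h.coeff_le_one hr hrate)
  refine (summable_nat_add_iff 1).1 (.of_norm_bounded_eventually_nat (hinv.mul_left 4) ?_)
  filter_upwards [eventually_ge_atTop 1] with k hk
  rw [Real.norm_of_nonneg (integral_nonneg fun _ => sq_nonneg _), ← div_eq_mul_inv]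
  exact h.integral_derwY_succ_sq_le hp hk

lemma le_derwssq (h : IsDERW μ p q α β S) (hp : 1 / 2 ≤ p) {ε : ℝ} (hε : 0 ≤ ε) {N : ℕ}
    (hdrift : ∀ k ≥ N, ∀ ω, |derwDrift p α β S k ω| ≤ 1 - ε)
    (hsum : Summable fun j => ∫ ω, derwY μ p α S j ω ^ 2 ∂μ) {n : ℕ} (hn : 1 ≤ n)
    (hnN : N ≤ n) :
    (n + 1) * (ε ^ 2 / (4 * derwa p α (n + 1) ^ 2)) ≤ derwssq μ p α S (n + 1) := by
  have hc₀ := h.coeff_nonneg hp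
  have hterm : ∀ k ∈ Finset.range (n + 1),
      ε ^ 2 / (4 * derwa p α (n + 1) ^ 2) ≤ ∫ ω, derwY μ p α S (n + 1 + k) ω ^ 2 ∂μ := by
    intro k hk
    have hk : k ≤ n := Nat.lt_succ_iff.1 (Finset.mem_range.1 hk)
    have hdouble :=
      derwa_add_le_two_mul hc₀ h.coeff_le_one (Nat.le_add_left 1 n) (hk.trans n.le_succ)
    have hpos := derwa_pos hc₀ (n + 1 + k)
    calc ε ^ 2 / (4 * derwa p α (n + 1) ^ 2) ≤ ε ^ 2 / derwa p α (n + 1 + k) ^ 2 := by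
          gcongr
          nlinarith
      _ ≤ ∫ ω, derwY μ p α S (n + 1 + k) ω ^ 2 ∂μ := by
          rw [show n + 1 + k = n + k + 1 by omega]
          exact h.div_le_integral_derwY_succ_sq hp (by omega) hε (hdrift _ (by omega))
  calc (n + 1) * (ε ^ 2 / (4 * derwa p α (n + 1) ^ 2))
      = ∑ _k ∈ Finset.range (n + 1), ε ^ 2 / (4 * derwa p α (n + 1) ^ 2) := by simp
    _ ≤ ∑ k ∈ Finset.range (n + 1), ∫ ω, derwY μ p α S (n + 1 + k) ω ^ 2 ∂μ :=
        Finset.sum_le_sum hterm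
    _ ≤ derwssq μ p α S (n + 1) :=
        (hsum.comp_injective (add_right_injective (n + 1))).sum_le_tsum _
          fun _ _ => integral_nonneg fun _ => sq_nonneg _

lemma summable_one_div_derwssq_sq_mul_derwa_pow (h : IsDERW μ p q α β S) (hp : 1 / 2 ≤ p)
    {ε : ℝ} (hε : 0 < ε) (hdrift : ∀ᶠ k in atTop, ∀ ω, |derwDrift p α β S k ω| ≤ 1 - ε)
    (hsum : Summable fun j => ∫ ω, derwY μ p α S j ω ^ 2 ∂μ) :
    Summable fun n : ℕ => 1 / (derwssq μ p α S (n + 1) ^ 2 * derwa p α (n + 1) ^ 4) := by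
  obtain ⟨N, hN⟩ := eventually_atTop.1 hdrift
  have hpseries : Summable fun n : ℕ => 1 / ((n + 1 : ℕ) : ℝ) ^ 2 :=
    (summable_nat_add_iff 1).2 (Real.summable_one_div_nat_pow.2 one_lt_two)
  refine .of_norm_bounded_eventually_nat (hpseries.mul_left (16 / ε ^ 4)) ?_
  filter_upwards [eventually_ge_atTop (max N 1)] with n hn
  have ha := derwa_pos (h.coeff_nonneg hp) (n + 1)
  have hlow := h.le_derwssq hp hε.le hN hsum (le_of_max_le_right hn) (le_of_max_le_left hn)
  have hc : 0 < (n + 1) * (ε ^ 2 / (4 * derwa p α (n + 1) ^ 2)) := by positivity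
  calc ‖1 / (derwssq μ p α S (n + 1) ^ 2 * derwa p α (n + 1) ^ 4)‖
      = 1 / (derwssq μ p α S (n + 1) ^ 2 * derwa p α (n + 1) ^ 4) :=
        Real.norm_of_nonneg (by positivity)
    _ ≤ 1 / (((n + 1) * (ε ^ 2 / (4 * derwa p α (n + 1) ^ 2))) ^ 2 * derwa p α (n + 1) ^ 4) :=
        by gcongr
    _ = 16 / ε ^ 4 * (1 / ((n + 1 : ℕ) : ℝ) ^ 2) := by
        push_cast
        field_simp
        ring

end Probability

end IsDERW

variable {Ω : Type*} {m0 : MeasurableSpace Ω} (μ : Measure Ω) [IsProbabilityMeasure μ]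
  (p q : ℝ) (α β : ℕ → ℝ) (S : ℕ → Ω → ℝ)

theorem derw_summable_inv_ssq_a (h : IsDERW μ p q α β S)
    (hcond : ((3 / 4 < p ∧ p < 1 ∧ 1 / (4 * p - 2) < liminf α atTop) ∨
      (p = 1 ∧ 1 / (4 * p - 2) < liminf α atTop ∧ limsup α atTop < 1 ∧
        0 < liminf β atTop ∧
        limsup β atTop < (1 - limsup α atTop) / (1 - liminf α atTop)))) :
    Summable fun n : ℕ => 1 / (derwssq μ p α S (n + 1) ^ 2 * derwa p α (n + 1) ^ 4) := by
  obtain ⟨hp, hα⟩ : 3 / 4 < p ∧ 1 / (4 * p - 2) < liminf α atTop := by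
    rcases hcond with ⟨hp, -, hα⟩ | ⟨rfl, hα, -⟩
    · exact ⟨hp, hα⟩
    · exact ⟨by norm_num, hα⟩
  have hαbdd : IsBoundedUnder (· ≥ ·) atTop α := isBoundedUnder_of ⟨0, fun n => (h.hα n).1⟩
  obtain ⟨r, hr, hrate⟩ := exists_gt_half_eventually_le_mul hαbdd (by linarith : 0 < 2 * p - 1)
    (by rw [div_lt_iff₀ (by linarith)] at hα; linarith)
  obtain ⟨ε, hε, hdrift⟩ : ∃ ε > 0, ∀ᶠ k in atTop, ∀ ω, |derwDrift p α β S k ω| ≤ 1 - ε := by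
    rcases hcond with ⟨-, hp₁, -⟩ | ⟨-, -, hαsup, hβinf, hβsup⟩
    · have hα_half : 1 / 2 < liminf α atTop :=
        (one_div_le_one_div_of_le (by linarith) (by linarith)).trans_lt hα
      exact ⟨1 - p, by linarith, by simpa using h.eventually_abs_derwDrift_le (by linarith) hα_half⟩
    · have hαinf := liminf_le_limsup (isBoundedUnder_of ⟨1, fun n => (h.hα n).2⟩) hαbdd
      have hratio : (1 - limsup α atTop) / (1 - liminf α atTop) ≤ 1 :=
        div_le_one_of_le₀ (by linarith) (by linarith)
      exact h.exists_pos_eventually_abs_derwDrift_le hαsup hβinf (hβsup.trans_le hratio)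
  exact h.summable_one_div_derwssq_sq_mul_derwa_pow (by linarith) hε hdrift
    (h.summable_integral_derwY_sq (by linarith) hr hrate)
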